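/- arXiv:2508.05110 — 2 statements merged into one kernel-verified Lean document; each statement's English description precedes it below -/
import Mathlib

section
/- Let A be a 0-1 b×v matrix with v ≥ 2 such that AᵀA = (r−λ)·I + λ·J for real numbers r, λ with r > λ ≥ 0. Then b ≥ v (Fisher's inequality). Consequently, if in addition b ≤ v and every row of A sums to the same value k, then b = v and k = r, i.e., A is the incidence matrix of a symmetric (v, k, λ)-design. -/
/-!
The Gram matrix `(r - λ)I + λJ` is positive definite, hence invertible, so
`v = rank (AᵀA) ≤ rank A ≤ b`. For a 0-1 matrix the diagonal entries of `AᵀA` are the column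
sums, which are therefore all `r`; counting the ones of `A` by rows and by columns gives
`b k = v r`, so `b = v` forces `k = r`.
-/

open Matrix Finset Real

/-- The all-ones `v × v` matrix `J`. -/
def allOnes (v : ℕ) : Matrix (Fin v) (Fin v) ℝ := Matrix.of fun _ _ => 1

theorem Matrix.card_le_card_of_isUnit_mul {m n R : Type*} [Fintype m] [Fintype n]
    [DecidableEq n] [CommRing R] [StrongRankCondition R]
    (B : Matrix n m R) (A : Matrix m n R) (h : IsUnit (B * A)) :
    Fintype.card n ≤ Fintype.card m :=
  calc Fintype.card n = (B * A).rank := (rank_of_isUnit _ h).symm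
    _ ≤ A.rank := rank_mul_le_right B A
    _ ≤ Fintype.card m := rank_le_card_height A

theorem allOnes_eq_vecMulVec (v : ℕ) : allOnes v = vecMulVec 1 1 := by
  ext i j
  simp [allOnes, vecMulVec]

theorem posSemidef_allOnes (v : ℕ) : (allOnes v).PosSemidef := by
  simpa [allOnes_eq_vecMulVec] using posSemidef_vecMulVec_self_star (1 : Fin v → ℝ)

theorem posDef_smul_one_add_smul_allOnes (v : ℕ) {r lam : ℝ} (hlam : 0 ≤ lam) (hrl : lam < r) :
    ((r - lam) • (1 : Matrix (Fin v) (Fin v) ℝ) + lam • allOnes v).PosDef :=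
  (PosDef.one.smul (sub_pos.mpr hrl)).add_posSemidef ((posSemidef_allOnes v).smul hlam)

theorem Matrix.diag_transpose_mul_self_eq_sum_col {m n R : Type*} [Fintype m] [Semiring R]
    (A : Matrix m n R) (hA : ∀ i j, A i j * A i j = A i j) (j : n) :
    (Aᵀ * A) j j = ∑ i, A i j := by
  simp [mul_apply, hA]

theorem diag_smul_one_add_smul_allOnes (v : ℕ) (r lam : ℝ) (j : Fin v) :
    ((r - lam) • (1 : Matrix (Fin v) (Fin v) ℝ) + lam • allOnes v) j j = r := by
  simp [allOnes]

/-- Fisher's inequality: a 0-1 matrix with Gram matrix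
`(r-λ)·I + λ·J`, `r > λ ≥ 0`, has at least as many rows as columns; consequently if
moreover `b ≤ v` and all rows sum to `k`, then `b = v` and `k = r` (a symmetric design). -/
theorem stmt_1 (b v : ℕ) (hv : 2 ≤ v) (A : Matrix (Fin b) (Fin v) ℝ)
    (h01 : ∀ i j, A i j = 0 ∨ A i j = 1)
    (r lam : ℝ) (hlam : 0 ≤ lam) (hrl : lam < r)
    (hgram : Aᵀ * A = (r - lam) • (1 : Matrix (Fin v) (Fin v) ℝ) + lam • allOnes v) :
    v ≤ b ∧
      (b ≤ v → ∀ k : ℝ, (∀ i, ∑ j, A i j = k) → b = v ∧ k = r) := by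
  have hvb : v ≤ b := by
    have hunit : IsUnit (Aᵀ * A) :=
      (hgram ▸ posDef_smul_one_add_smul_allOnes v hlam hrl).isUnit
    simpa using card_le_card_of_isUnit_mul Aᵀ A hunit
  refine ⟨hvb, fun hbv k hrow => ?_⟩
  obtain rfl : b = v := le_antisymm hbv hvb
  have hcol : ∀ j, ∑ i, A i j = r := fun j => by
    have hidem : ∀ i j, A i j * A i j = A i j := fun i j => by
      rcases h01 i j with h | h <;> simp [h]
    rw [← diag_transpose_mul_self_eq_sum_col A hidem, hgram, diag_smul_one_add_smul_allOnes]
  have hcount : ∑ i, ∑ j, A i j = ∑ j, ∑ i, A i j := Finset.sum_comm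
  simp only [hrow, hcol, sum_const, card_univ, Fintype.card_fin, nsmul_eq_mul] at hcount
  exact ⟨rfl, mul_left_cancel₀ (Nat.cast_ne_zero.mpr (by omega)) hcount⟩
end

section
/- Let v ≥ 2 be an integer and let M be a v×v real symmetric positive definite matrix such that M·1_v = v·1_v and tr(M) = T with T > v. Then tr(M⁻¹) = (v−1)²/(T − v) + 1/v if and only if M = a·I + b·J with a = (T − v)/(v − 1) and b = 1 − a/v; equivalently, if and only if M has eigenvalue (T − v)/(v − 1) with multiplicity v − 1 and eigenvalue v with multiplicity 1. -/
open Matrix Finset Real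

/-!
Since `M` is symmetric with constant row sums `v`, it commutes with `J`, and `MJ = vJ`,
`M⁻¹J = J / v`. For `N = M - a•I - b•J` this gives the identity
`tr(N M⁻¹ N) = a² (tr(M⁻¹) - (v-1)²/(T-v) - 1/v)`.
As `M⁻¹` is positive definite and `N` is symmetric, the left-hand side is nonnegative and
vanishes exactly when `N = 0`, which proves both directions at once.
-/

open scoped ComplexOrder

namespace Matrix

variable {n m 𝕜 : Type*} [Fintype n] [Fintype m] [RCLike 𝕜]

theorem PosDef.conjTranspose_mul_mul_same_eq_zero_iff
    {P : Matrix n n 𝕜} (hP : P.PosDef) {B : Matrix n m 𝕜} : Bᴴ * P * B = 0 ↔ B = 0 := by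
  classical
  refine ⟨fun h => ?_, fun h => by simp [h]⟩
  by_contra hB
  obtain ⟨x, hx⟩ : ∃ x, B *ᵥ x ≠ 0 := by
    by_contra! hx
    exact hB (ext_of_mulVec_single fun i => by rw [hx, zero_mulVec])
  have := hP.dotProduct_mulVec_pos hx
  rw [star_mulVec, ← dotProduct_mulVec, mulVec_mulVec, mulVec_mulVec, h] at this
  simp at this

theorem PosDef.trace_conjTranspose_mul_mul_same_eq_zero_iff
    {P : Matrix n n 𝕜} (hP : P.PosDef) {B : Matrix n m 𝕜} : (Bᴴ * P * B).trace = 0 ↔ B = 0 := by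
  rw [(hP.posSemidef.conjTranspose_mul_mul_same B).trace_eq_zero_iff,
    hP.conjTranspose_mul_mul_same_eq_zero_iff]

end Matrix

section allOnes

variable {v : ℕ} {M : Matrix (Fin v) (Fin v) ℝ} {c : ℝ}

theorem allOnes_mul_allOnes : allOnes v * allOnes v = (v : ℝ) • allOnes v := by
  ext i k
  simp [allOnes, mul_apply]

theorem trace_allOnes : (allOnes v).trace = v := by
  simp [allOnes, trace]

theorem transpose_allOnes : (allOnes v)ᵀ = allOnes v := rfl

theorem mul_allOnes_of_mulVec_one (hM : M *ᵥ (fun _ => 1) = fun _ => c) :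
    M * allOnes v = c • allOnes v := by
  ext i k
  simpa [allOnes, mul_apply, mulVec, dotProduct] using congrFun hM i

theorem allOnes_mul_of_mulVec_one (hsymm : M.IsSymm) (hM : M *ᵥ (fun _ => 1) = fun _ => c) :
    allOnes v * M = c • allOnes v := by
  rw [← hsymm.eq, ← transpose_allOnes, ← transpose_mul, mul_allOnes_of_mulVec_one hM,
    transpose_smul, transpose_allOnes]

theorem sub_smul_one_sub_smul_allOnes_mul_self (hMJ : M * allOnes v = c • allOnes v)
    (hJM : allOnes v * M = c • allOnes v) (a b : ℝ) :
    (M - a • 1 - b • allOnes v) * (M - a • 1 - b • allOnes v) =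
      M * M - (2 * a) • M + a ^ 2 • 1 + (b * (b * v + 2 * a - 2 * c)) • allOnes v := by
  simp only [sub_mul, mul_sub, Matrix.smul_mul, Matrix.mul_smul, Matrix.one_mul, Matrix.mul_one,
    hMJ, hJM, allOnes_mul_allOnes, smul_smul]
  match_scalars <;> ring

theorem inv_mul_allOnes (hdet : IsUnit M.det) (hc : c ≠ 0)
    (hMJ : M * allOnes v = c • allOnes v) :
    M⁻¹ * allOnes v = c⁻¹ • allOnes v := by
  calc M⁻¹ * allOnes v = M⁻¹ * (c⁻¹ • (M * allOnes v)) := by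
        rw [hMJ, smul_smul, inv_mul_cancel₀ hc, one_smul]
    _ = c⁻¹ • allOnes v := by
        rw [Matrix.mul_smul, ← Matrix.mul_assoc, nonsing_inv_mul _ hdet, Matrix.one_mul]

theorem trace_inv_mul_sub_smul_one_sub_smul_allOnes_mul_self (hdet : IsUnit M.det)
    (hv : (v : ℝ) ≠ 0) (hMJ : M * allOnes v = (v : ℝ) • allOnes v)
    (hJM : allOnes v * M = (v : ℝ) • allOnes v) (a b : ℝ) :
    (M⁻¹ * ((M - a • 1 - b • allOnes v) * (M - a • 1 - b • allOnes v))).trace =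
      M.trace - 2 * a * v + a ^ 2 * M⁻¹.trace + b * (b * v + 2 * a - 2 * v) := by
  rw [sub_smul_one_sub_smul_allOnes_mul_self hMJ hJM]
  simp only [Matrix.mul_add, Matrix.mul_sub, Matrix.mul_smul, ← Matrix.mul_assoc,
    nonsing_inv_mul _ hdet, Matrix.one_mul, Matrix.mul_one, inv_mul_allOnes hdet hv hMJ,
    trace_add, trace_sub, trace_smul, trace_one, trace_allOnes, Fintype.card_fin, smul_eq_mul]
  field_simp

end allOnes

/-- for a symmetric positive definite `v × v` matrix `M` with
`M·1 = v·1` and `tr(M) = T > v`, equality `tr(M⁻¹) = (v-1)²/(T-v) + 1/v` holds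
if and only if `M = a·I + b·J` with `a = (T-v)/(v-1)` and `b = 1 - a/v`. -/
theorem stmt_8 (v : ℕ) (hv : 2 ≤ v) (M : Matrix (Fin v) (Fin v) ℝ)
    (hsym : M.IsSymm) (hpd : M.PosDef)
    (hone : M.mulVec (fun _ => 1) = fun _ => (v : ℝ))
    (T : ℝ) (hT : M.trace = T) (hTv : (v : ℝ) < T) :
    M⁻¹.trace = ((v : ℝ) - 1) ^ 2 / (T - v) + 1 / v ↔
      M = ((T - (v : ℝ)) / ((v : ℝ) - 1)) • (1 : Matrix (Fin v) (Fin v) ℝ) +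
        (1 - ((T - (v : ℝ)) / ((v : ℝ) - 1)) / v) • allOnes v := by
  have hv2 : (2 : ℝ) ≤ v := by exact_mod_cast hv
  have hv0 : (v : ℝ) ≠ 0 := by linarith
  have hv1 : (v : ℝ) - 1 ≠ 0 := by linarith
  set a := (T - (v : ℝ)) / ((v : ℝ) - 1) with ha
  set b := 1 - a / v
  have ha0 : a ≠ 0 := div_ne_zero (by linarith) hv1
  have hTa : T = v + a * (v - 1) := by rw [ha, div_mul_cancel₀ _ hv1]; ring
  set N := M - a • 1 - b • allOnes v
  have hN : Nᴴ = N := by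
    simp only [N, conjTranspose_eq_transpose_of_trivial, transpose_sub, transpose_smul,
      transpose_one, hsym.eq, transpose_allOnes]
  have hdefect :
      (Nᴴ * M⁻¹ * N).trace = a ^ 2 * (M⁻¹.trace - (((v : ℝ) - 1) ^ 2 / (T - v) + 1 / v)) := by
    rw [hN, trace_mul_cycle, trace_mul_comm,
      trace_inv_mul_sub_smul_one_sub_smul_allOnes_mul_self
        ((isUnit_iff_isUnit_det M).mp hpd.isUnit) hv0 (mul_allOnes_of_mulVec_one hone)
        (allOnes_mul_of_mulVec_one hsym hone), hT, hTa]
    simp only [b]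
    field_simp
    ring
  rw [← sub_eq_zero, ← mul_eq_zero_iff_left (pow_ne_zero 2 ha0), ← hdefect,
    hpd.inv.trace_conjTranspose_mul_mul_same_eq_zero_iff,
    show N = M - (a • 1 + b • allOnes v) from sub_sub _ _ _, sub_eq_zero]
end
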